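/- (Positivity of the two-dimensional dimensionally-split scheme S1.) Let N ≥ 2, Δx, Δy, Δt > 0. Suppose ρⁿ, ρ^{n+1/2}, ρⁿ⁺¹ ∈ ℝ^{N×N} and real interface velocities u_{i+1/2,j} (1 ≤ i ≤ N−1, 1 ≤ j ≤ N) and v_{i,j+1/2} (1 ≤ i ≤ N, 1 ≤ j ≤ N−1) satisfy: Step 1: F_{i+1/2,j} = ρᴱ_{ij}·u_{i+1/2,j}⁺ + ρᵂ_{i+1,j}·u_{i+1/2,j}⁻ where for each j the vectors ρᴱ_{·,j}, ρᵂ_{·,j} are the second-order minmod reconstructions (θ = 2, mesh Δx) of the row ρⁿ_{·,j}; F_{1/2,j} = F_{N+1/2,j} = 0; and ρ^{n+1/2}_{ij} = ρⁿ_{ij} − (Δt/Δx)(F_{i+1/2,j} − F_{i−1/2,j}). Step 2: G_{i,j+1/2} = ρᴺ_{ij}·v_{i,j+1/2}⁺ + ρˢ_{i,j+1}·v_{i,j+1/2}⁻ where for each i the vectors ρᴺ_{i,·}, ρˢ_{i,·} are the second-order minmod reconstructions (θ = 2, mesh Δy) of the column ρ^{n+1/2}_{i,·}; G_{i,1/2}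 = G_{i,N+1/2} = 0; and ρⁿ⁺¹_{ij} = ρ^{n+1/2}_{ij} − (Δt/Δy)(G_{i,j+1/2} − G_{i,j−1/2}). If ρⁿ_{ij} ≥ 0 for all i,j and the CFL conditions 2·Δt·max(u_{i+1/2,j}⁺, −u_{i+1/2,j}⁻) ≤ Δx and 2·Δt·max(v_{i,j+1/2}⁺, −v_{i,j+1/2}⁻) ≤ Δy hold at every interface, then ρⁿ⁺¹_{ij} ≥ 0 for all i,j. -/

import Mathlib

/-!
Each half step of S1 is the one-dimensional scheme applied to every row (resp. column), so it
suffices that one 1D step preserves nonnegativity. The minmod slope never exceeds the forward or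
the backward difference, so the reconstructions `ρᴱ_i`, `ρᵂ_i` lie between neighbouring cell
values and are nonnegative. Writing `ρ_i = (ρᴱ_i + ρᵂ_i)/2` and dropping the two fluxes of
favourable sign, the update is at least
`ρᴱ_i (1/2 - λ u⁺_{i+1/2}) + ρᵂ_i (1/2 + λ u⁻_{i-1/2})` with `λ = Δt/Δx`,
which the CFL condition makes nonnegative.
-/

/-- The minmod limiter: `min` if all arguments are positive, `max` if all are negative,
and `0` otherwise. -/
noncomputable def minmod3 (a b c : ℝ) : ℝ :=
  if 0 < a ∧ 0 < b ∧ 0 < c then min a (min b c)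
  else if a < 0 ∧ b < 0 ∧ c < 0 then max a (max b c)
  else 0

/-- The minmod mslope (θ = 2, mesh `dx`) of a vector `ρ` indexed by `1,…,N`:
interior cells `2 ≤ i ≤ N−1` use the minmod limiter; the first and last cells get `0`. -/
noncomputable def mslope (N : ℕ) (dx : ℝ) (ρ : ℕ → ℝ) (i : ℕ) : ℝ :=
  if 2 ≤ i ∧ i ≤ N - 1 then
    minmod3 (2 * (ρ (i + 1) - ρ i) / dx)
      ((ρ (i + 1) - ρ (i - 1)) / (2 * dx))
      (2 * (ρ i - ρ (i - 1)) / dx)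
  else 0

/-- East reconstruction: `ρᴱ_i = ρ_i + (dx/2)·σ_i`. -/
noncomputable def recE (N : ℕ) (dx : ℝ) (ρ : ℕ → ℝ) (i : ℕ) : ℝ :=
  ρ i + dx / 2 * mslope N dx ρ i

/-- West reconstruction: `ρᵂ_i = ρ_i − (dx/2)·σ_i`. -/
noncomputable def recW (N : ℕ) (dx : ℝ) (ρ : ℕ → ℝ) (i : ℕ) : ℝ :=
  ρ i - dx / 2 * mslope N dx ρ i

/-- Positive part `z⁺ = max(z,0)`. -/
noncomputable def pospart (z : ℝ) : ℝ := max z 0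

/-- Negative part `z⁻ = min(z,0)`. -/
noncomputable def negpart (z : ℝ) : ℝ := min z 0

open Set
open scoped Interval

lemma pospart_nonneg (z : ℝ) : 0 ≤ pospart z := le_max_right _ _

lemma negpart_nonpos (z : ℝ) : negpart z ≤ 0 := min_le_right _ _

lemma minmod3_mem_uIcc_left (a b c : ℝ) : minmod3 a b c ∈ [[0, a]] := by
  unfold minmod3
  split_ifs with hpos hneg
  · exact mem_uIcc_of_le (lt_min hpos.1 (lt_min hpos.2.1 hpos.2.2)).le (min_le_left _ _)
  · exact mem_uIcc_of_ge (le_max_left _ _) (max_lt hneg.1 (max_lt hneg.2.1 hneg.2.2)).le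
  · exact left_mem_uIcc

lemma minmod3_mem_uIcc_right (a b c : ℝ) : minmod3 a b c ∈ [[0, c]] := by
  unfold minmod3
  split_ifs with hpos hneg
  · exact mem_uIcc_of_le (lt_min hpos.1 (lt_min hpos.2.1 hpos.2.2)).le
      ((min_le_right _ _).trans (min_le_right _ _))
  · exact mem_uIcc_of_ge ((le_max_right _ _).trans (le_max_right _ _))
      (max_lt hneg.1 (max_lt hneg.2.1 hneg.2.2)).le
  · exact left_mem_uIcc

lemma mul_mem_uIcc_zero {x a : ℝ} (k : ℝ) (h : x ∈ [[0, a]]) : k * x ∈ [[0, k * a]] := by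
  simpa using mem_image_of_mem (k * ·) h

section Reconstruction

variable {N : ℕ} {dx : ℝ} {ρ : ℕ → ℝ} {i : ℕ}

lemma half_mul_mslope_mem_uIcc_forward (hdx : dx ≠ 0) :
    dx / 2 * mslope N dx ρ i ∈ [[0, ρ (i + 1) - ρ i]] := by
  unfold mslope
  split_ifs
  · convert mul_mem_uIcc_zero (dx / 2) (minmod3_mem_uIcc_left _ _ _) using 2
    field_simp
  · simp

lemma half_mul_mslope_mem_uIcc_backward (hdx : dx ≠ 0) :
    dx / 2 * mslope N dx ρ i ∈ [[0, ρ i - ρ (i - 1)]] := by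
  unfold mslope
  split_ifs
  · convert mul_mem_uIcc_zero (dx / 2) (minmod3_mem_uIcc_right _ _ _) using 2
    field_simp
  · simp

lemma recE_mem_uIcc (hdx : dx ≠ 0) : recE N dx ρ i ∈ [[ρ i, ρ (i + 1)]] := by
  simpa [recE] using
    mem_image_of_mem (ρ i + ·)
      (half_mul_mslope_mem_uIcc_forward (N := N) (ρ := ρ) (i := i) hdx)

lemma recW_mem_uIcc (hdx : dx ≠ 0) : recW N dx ρ i ∈ [[ρ (i - 1), ρ i]] := by
  simpa [recW, uIcc_comm] using
    mem_image_of_mem (ρ i - ·)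
      (half_mul_mslope_mem_uIcc_backward (N := N) (ρ := ρ) (i := i) hdx)

lemma recE_add_recW : recE N dx ρ i + recW N dx ρ i = 2 * ρ i := by
  rw [recE, recW]
  ring

lemma recE_nonneg (hdx : dx ≠ 0) (hρ : ∀ k, 1 ≤ k → k ≤ N → 0 ≤ ρ k) (h1 : 1 ≤ i)
    (h2 : i ≤ N) : 0 ≤ recE N dx ρ i := by
  rcases h2.lt_or_eq with h | rfl
  · exact le_inf (hρ i h1 h2) (hρ (i + 1) (by omega) h) |>.trans (recE_mem_uIcc hdx).1
  · have : mslope i dx ρ i = 0 := if_neg (by omega)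
    simpa [recE, this] using hρ i h1 le_rfl

lemma recW_nonneg (hdx : dx ≠ 0) (hρ : ∀ k, 1 ≤ k → k ≤ N → 0 ≤ ρ k) (h1 : 1 ≤ i)
    (h2 : i ≤ N) : 0 ≤ recW N dx ρ i := by
  rcases h1.lt_or_eq with h | rfl
  · exact le_inf (hρ (i - 1) (by omega) (by omega)) (hρ i h1 h2)
      |>.trans (recW_mem_uIcc hdx).1
  · have : mslope N dx ρ 1 = 0 := if_neg (by omega)
    simpa [recW, this] using hρ 1 le_rfl h2

end Reconstruction

lemma cell_update_nonneg {ρ E W Fout Fin p q dt dx : ℝ} (hdx : 0 < dx) (hdt : 0 ≤ dt)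
    (hρ : E + W = 2 * ρ) (hE : 0 ≤ E) (hW : 0 ≤ W) (hout : Fout ≤ E * p) (hin : W * q ≤ Fin)
    (hp : 2 * dt * p ≤ dx) (hq : 2 * dt * -q ≤ dx) :
    0 ≤ ρ - dt / dx * (Fout - Fin) := by
  rw [sub_nonneg, div_mul_eq_mul_div, div_le_iff₀ hdx]
  nlinarith [mul_le_mul_of_nonneg_left hout hdt, mul_le_mul_of_nonneg_left hin hdt,
    mul_nonneg hE (sub_nonneg.2 hp), mul_nonneg hW (sub_nonneg.2 hq)]

theorem muscl_step_nonneg {N : ℕ} {dx dt : ℝ} (hdx : 0 < dx) (hdt : 0 ≤ dt)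
    {ρ ρ' u F : ℕ → ℝ}
    (hF : ∀ i, 1 ≤ i → i ≤ N - 1 →
      F i = recE N dx ρ i * pospart (u i) + recW N dx ρ (i + 1) * negpart (u i))
    (hF0 : F 0 = 0) (hFN : F N = 0)
    (hupd : ∀ i, 1 ≤ i → i ≤ N → ρ' i = ρ i - dt / dx * (F i - F (i - 1)))
    (hρ : ∀ k, 1 ≤ k → k ≤ N → 0 ≤ ρ k)
    (hCFL : ∀ i, 1 ≤ i → i ≤ N - 1 → 2 * dt * max (pospart (u i)) (-negpart (u i)) ≤ dx)
    (i : ℕ) (h1 : 1 ≤ i) (h2 : i ≤ N) : 0 ≤ ρ' i := by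
  obtain ⟨p, hout, hp⟩ : ∃ p, F i ≤ recE N dx ρ i * p ∧ 2 * dt * p ≤ dx := by
    rcases h2.lt_or_eq with h | rfl
    · refine ⟨pospart (u i), ?_, (mul_le_mul_of_nonneg_left (le_max_left _ _)
        (by positivity)).trans (hCFL i h1 (by omega))⟩
      rw [hF i h1 (by omega)]
      exact add_le_of_nonpos_right (mul_nonpos_of_nonneg_of_nonpos
        (recW_nonneg hdx.ne' hρ (by omega) (by omega)) (negpart_nonpos _))
    -- at a wall the flux vanishes, as it would for a zero velocity
    · exact ⟨0, by simp [hFN], by simpa using hdx.le⟩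
  obtain ⟨q, hin, hq⟩ : ∃ q, recW N dx ρ i * q ≤ F (i - 1) ∧ 2 * dt * -q ≤ dx := by
    rcases h1.lt_or_eq with h | rfl
    · refine ⟨negpart (u (i - 1)), ?_, (mul_le_mul_of_nonneg_left (le_max_right _ _)
        (by positivity)).trans (hCFL (i - 1) (by omega) (by omega))⟩
      rw [hF (i - 1) (by omega) (by omega), Nat.sub_add_cancel h1]
      exact le_add_of_nonneg_left (mul_nonneg
        (recE_nonneg hdx.ne' hρ (by omega) (by omega)) (pospart_nonneg _))
    · exact ⟨0, by simp [hF0], by simpa using hdx.le⟩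
  rw [hupd i h1 h2]
  exact cell_update_nonneg hdx hdt recE_add_recW (recE_nonneg hdx.ne' hρ h1 h2)
    (recW_nonneg hdx.ne' hρ h1 h2) hout hin hp hq

theorem stmt_10_general (N : ℕ) (dx dy dt : ℝ)
    (hdx : 0 < dx) (hdy : 0 < dy) (hdt : 0 < dt)
    (ρn ρh ρn1 u v F G : ℕ → ℕ → ℝ)
    -- Step 1: evolution in the x-direction, row-wise reconstructions of ρⁿ
    (hF : ∀ i j, 1 ≤ i → i ≤ N - 1 → 1 ≤ j → j ≤ N →
      F i j = recE N dx (fun i' => ρn i' j) i * pospart (u i j)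
        + recW N dx (fun i' => ρn i' j) (i + 1) * negpart (u i j))
    (hF0 : ∀ j, 1 ≤ j → j ≤ N → F 0 j = 0)
    (hFN : ∀ j, 1 ≤ j → j ≤ N → F N j = 0)
    (hupd1 : ∀ i j, 1 ≤ i → i ≤ N → 1 ≤ j → j ≤ N →
      ρh i j = ρn i j - dt / dx * (F i j - F (i - 1) j))
    -- Step 2: evolution in the y-direction, column-wise reconstructions of ρ^{n+1/2}
    (hG : ∀ i j, 1 ≤ i → i ≤ N → 1 ≤ j → j ≤ N - 1 →
      G i j = recE N dy (fun j' => ρh i j') j * pospart (v i j)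
        + recW N dy (fun j' => ρh i j') (j + 1) * negpart (v i j))
    (hG0 : ∀ i, 1 ≤ i → i ≤ N → G i 0 = 0)
    (hGN : ∀ i, 1 ≤ i → i ≤ N → G i N = 0)
    (hupd2 : ∀ i j, 1 ≤ i → i ≤ N → 1 ≤ j → j ≤ N →
      ρn1 i j = ρh i j - dt / dy * (G i j - G i (j - 1)))
    (hpos : ∀ i j, 1 ≤ i → i ≤ N → 1 ≤ j → j ≤ N → 0 ≤ ρn i j)
    (hCFLu : ∀ i j, 1 ≤ i → i ≤ N - 1 → 1 ≤ j → j ≤ N →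
      2 * dt * max (pospart (u i j)) (-negpart (u i j)) ≤ dx)
    (hCFLv : ∀ i j, 1 ≤ i → i ≤ N → 1 ≤ j → j ≤ N - 1 →
      2 * dt * max (pospart (v i j)) (-negpart (v i j)) ≤ dy) :
    ∀ i j, 1 ≤ i → i ≤ N → 1 ≤ j → j ≤ N → 0 ≤ ρn1 i j := by
  have hρh : ∀ i j, 1 ≤ i → i ≤ N → 1 ≤ j → j ≤ N → 0 ≤ ρh i j :=
    fun i j hi1 hi2 hj1 hj2 => muscl_step_nonneg hdx hdt.le
      (fun i' h1 h2 => hF i' j h1 h2 hj1 hj2) (hF0 j hj1 hj2) (hFN j hj1 hj2)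
      (fun i' h1 h2 => hupd1 i' j h1 h2 hj1 hj2) (fun k h1 h2 => hpos k j h1 h2 hj1 hj2)
      (fun k h1 h2 => hCFLu k j h1 h2 hj1 hj2) i hi1 hi2
  exact fun i j hi1 hi2 hj1 hj2 => muscl_step_nonneg hdy hdt.le
    (fun j' h1 h2 => hG i j' hi1 hi2 h1 h2) (hG0 i hi1 hi2) (hGN i hi1 hi2)
    (fun j' h1 h2 => hupd2 i j' hi1 hi2 h1 h2) (fun k h1 h2 => hρh i k hi1 hi2 h1 h2)
    (fun k h1 h2 => hCFLv i k hi1 hi2 h1 h2) j hj1 hj2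

/-- positivity of the two-dimensional dimensionally-split scheme S1 under
the CFL conditions, for arbitrary interface velocities. -/
theorem stmt_10 (N : ℕ) (hN : 2 ≤ N) (dx dy dt : ℝ)
    (hdx : 0 < dx) (hdy : 0 < dy) (hdt : 0 < dt)
    (ρn ρh ρn1 u v F G : ℕ → ℕ → ℝ)
    -- Step 1: evolution in the x-direction, row-wise reconstructions of ρⁿ
    (hF : ∀ i j, 1 ≤ i → i ≤ N - 1 → 1 ≤ j → j ≤ N →
      F i j = recE N dx (fun i' => ρn i' j) i * pospart (u i j)
        + recW N dx (fun i' => ρn i' j) (i + 1) * negpart (u i j))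
    (hF0 : ∀ j, 1 ≤ j → j ≤ N → F 0 j = 0)
    (hFN : ∀ j, 1 ≤ j → j ≤ N → F N j = 0)
    (hupd1 : ∀ i j, 1 ≤ i → i ≤ N → 1 ≤ j → j ≤ N →
      ρh i j = ρn i j - dt / dx * (F i j - F (i - 1) j))
    -- Step 2: evolution in the y-direction, column-wise reconstructions of ρ^{n+1/2}
    (hG : ∀ i j, 1 ≤ i → i ≤ N → 1 ≤ j → j ≤ N - 1 →
      G i j = recE N dy (fun j' => ρh i j') j * pospart (v i j)
        + recW N dy (fun j' => ρh i j') (j + 1) * negpart (v i j))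
    (hG0 : ∀ i, 1 ≤ i → i ≤ N → G i 0 = 0)
    (hGN : ∀ i, 1 ≤ i → i ≤ N → G i N = 0)
    (hupd2 : ∀ i j, 1 ≤ i → i ≤ N → 1 ≤ j → j ≤ N →
      ρn1 i j = ρh i j - dt / dy * (G i j - G i (j - 1)))
    (hpos : ∀ i j, 1 ≤ i → i ≤ N → 1 ≤ j → j ≤ N → 0 ≤ ρn i j)
    (hCFLu : ∀ i j, 1 ≤ i → i ≤ N - 1 → 1 ≤ j → j ≤ N →
      2 * dt * max (pospart (u i j)) (-negpart (u i j)) ≤ dx)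
    (hCFLv : ∀ i j, 1 ≤ i → i ≤ N → 1 ≤ j → j ≤ N - 1 →
      2 * dt * max (pospart (v i j)) (-negpart (v i j)) ≤ dy) :
    ∀ i j, 1 ≤ i → i ≤ N → 1 ≤ j → j ≤ N → 0 ≤ ρn1 i j :=
  stmt_10_general N dx dy dt hdx hdy hdt ρn ρh ρn1 u v F G hF hF0 hFN hupd1 hG hG0 hGN hupd2 hpos
    hCFLu hCFLv
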